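/- arXiv:2202.09384 — 4 statements merged into one kernel-verified Lean document; each statement's English description precedes it below -/
import Mathlib

section
/- Let A be a supercommutative superalgebra over a field of characteristic ≠ 2 and suppose the odd elements y₁, …, y_k ∈ A₁ form an odd regular sequence, i.e., Ann_A(y₁⋯y_k) = Ay₁ + ⋯ + Ay_k. Then the Krull dimension of A₀/Ann_{A₀}(y₁⋯y_k) equals the Krull dimension of A₀ (i.e., y₁,…,y_k form a system of odd parameters). -/
/-- A supercommutative superalgebra structure on a `k`-algebra `A`:
`A = ev ⊕ od` is `ℤ/2`-graded and homogeneous elements satisfy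
`a * b = (-1)^{|a||b|} * (b * a)`. -/
structure SuperAlg (k A : Type) [Field k] [Ring A] [Algebra k A] where
  ev : Submodule k A
  od : Submodule k A
  sup_eq_top : ev ⊔ od = ⊤
  inf_eq_bot : ev ⊓ od = ⊥
  one_mem : (1 : A) ∈ ev
  mul_ee : ∀ a ∈ ev, ∀ b ∈ ev, a * b ∈ ev
  mul_eo : ∀ a ∈ ev, ∀ b ∈ od, a * b ∈ od
  mul_oe : ∀ a ∈ od, ∀ b ∈ ev, a * b ∈ od
  mul_oo : ∀ a ∈ od, ∀ b ∈ od, a * b ∈ ev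
  comm_ee : ∀ a ∈ ev, ∀ b ∈ ev, a * b = b * a
  comm_eo : ∀ a ∈ ev, ∀ b ∈ od, a * b = b * a
  comm_oe : ∀ a ∈ od, ∀ b ∈ ev, a * b = b * a
  comm_oo : ∀ a ∈ od, ∀ b ∈ od, a * b = -(b * a)

variable {k A : Type} [Field k] [Ring A] [Algebra k A]

/-- The even part `A₀` of a superalgebra, as a subalgebra of `A`. -/
def SuperAlg.evSub (S : SuperAlg k A) : Subalgebra k A where
  carrier := S.ev
  mul_mem' := fun {a b} ha hb => S.mul_ee a ha b hb
  add_mem' := fun {a b} ha hb => S.ev.add_mem ha hb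
  one_mem' := S.one_mem
  zero_mem' := S.ev.zero_mem
  algebraMap_mem' := fun r => by
    rw [Algebra.algebraMap_eq_smul_one]; exact S.ev.smul_mem r S.one_mem

/-- The even part of a supercommutative superalgebra is a commutative ring. -/
noncomputable instance SuperAlg.instCommRingEv (S : SuperAlg k A) : CommRing S.evSub :=
  { (inferInstance : Ring S.evSub) with
    mul_comm := fun a b => Subtype.ext (S.comm_ee a.1 a.2 b.1 b.2) }

/-- The annihilator in the even part `A₀` of an element `p` of `A`. -/
def SuperAlg.annEv (S : SuperAlg k A) (p : A) : Ideal S.evSub where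
  carrier := {a : S.evSub | (a : A) * p = 0}
  add_mem' := by
    intro a b ha hb
    show ((a + b : S.evSub) : A) * p = 0
    push_cast
    rw [add_mul, ha, hb, add_zero]
  zero_mem' := by
    show ((0 : S.evSub) : A) * p = 0
    push_cast
    rw [zero_mul]
  smul_mem' := by
    intro c x hx
    show ((c * x : S.evSub) : A) * p = 0
    push_cast
    rw [mul_assoc, hx, mul_zero]

theorem myaux {R : Type} [CommRing R] {I : Ideal R}
    (h : I ≤ nilradical R) : ringKrullDim (R ⧸ I) = ringKrullDim R := by
  refine le_antisymm (ringKrullDim_quotient_le I) ?_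
  have hle : ∀ P : Ideal R, P.IsPrime → I ≤ P := fun P hP =>
    h.trans (nilradical_le_prime P)
  have hsurj := Ideal.Quotient.mk_surjective (I := I)
  have hcm : ∀ P : PrimeSpectrum R, (P.asIdeal.map (Ideal.Quotient.mk I)).comap
      (Ideal.Quotient.mk I) = P.asIdeal := by
    intro P
    rw [Ideal.comap_map_of_surjective _ hsurj, ← RingHom.ker_eq_comap_bot, Ideal.mk_ker,
      sup_eq_left.mpr (hle P.asIdeal P.isPrime)]
  refine Order.krullDim_le_of_strictMono
    (fun P => ⟨P.asIdeal.map (Ideal.Quotient.mk I),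
      Ideal.map_isPrime_of_surjective hsurj (by
        rw [Ideal.mk_ker]; exact hle P.asIdeal P.isPrime)⟩) ?_
  intro P Q hPQ
  refine lt_of_le_of_ne (Ideal.map_mono hPQ.le) (fun heq => hPQ.ne ?_)
  have : P.asIdeal = Q.asIdeal := by
    have := congrArg (Ideal.comap (Ideal.Quotient.mk I)) (congrArg PrimeSpectrum.asIdeal heq)
    rwa [hcm P, hcm Q] at this
  exact PrimeSpectrum.ext this

/-- an odd regular sequence `y₁, …, y_t` (i.e. with
`Ann_A(y₁⋯y_t) = Ay₁ + ⋯ + Ay_t`) is a system of odd parameters: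
`Kdim (A₀ / Ann_{A₀}(y₁⋯y_t)) = Kdim A₀`. -/
theorem odd_regular_is_odd_params (hchar : (2 : k) ≠ 0) (S : SuperAlg k A)
    (hnoeth : IsNoetherianRing S.evSub) (d : ℕ) (hd : ringKrullDim S.evSub = d)
    (n : ℕ) (yg : Fin n → A) (hyg : ∀ i, yg i ∈ S.od)
    (hgen : ∀ b ∈ S.od,
      b ∈ Submodule.span k {x : A | ∃ a ∈ S.ev, ∃ i : Fin n, x = a * yg i})
    (t : ℕ) (y : Fin t → A) (hy : ∀ i, y i ∈ S.od)
    (hreg : ∀ x : A, x * (List.ofFn y).prod = 0 ↔ x ∈ Ideal.span (Set.range y)) :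
    ringKrullDim (S.evSub ⧸ S.annEv (List.ofFn y).prod) = ringKrullDim S.evSub := by
  set p := (List.ofFn y).prod with hp
  apply myaux
  intro a ha
  have hap : (a : A) * p = 0 := ha
  have hmem : (a : A) ∈ Ideal.span (Set.range y) := (hreg a).mp hap
  rw [Ideal.span, Submodule.mem_span_range_iff_exists_fun] at hmem
  obtain ⟨c, hc⟩ := hmem
  -- decompose each coefficient into even and odd parts
  have hdec : ∀ i, ∃ e ∈ S.ev, ∃ o ∈ S.od, c i = e + o := by
    intro i
    have : c i ∈ S.ev ⊔ S.od := by rw [S.sup_eq_top]; trivial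
    obtain ⟨e, he, o, ho, h⟩ := Submodule.mem_sup.mp this
    exact ⟨e, he, o, ho, h.symm⟩
  choose e he o ho hc' using hdec
  -- odd elements square to zero
  have hosq : ∀ z ∈ S.od, z * z = 0 := by
    intro z hz
    have h1 : z * z = -(z * z) := S.comm_oo z hz z hz
    have h2 : (2 : k) • (z * z) = 0 := by
      rw [two_smul]
      nth_rewrite 1 [h1]
      exact neg_add_cancel _
    have := congrArg (fun w => (2 : k)⁻¹ • w) h2
    simpa [smul_smul, inv_mul_cancel₀ hchar] using this
  -- each o i * y i is even with zero square
  have hmemev : ∀ i, o i * y i ∈ S.ev := fun i => S.mul_oo _ (ho i) _ (hy i)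
  set f : Fin t → S.evSub := fun i => ⟨o i * y i, hmemev i⟩ with hf
  have hfsq : ∀ i, (f i) * (f i) = 0 := by
    intro i
    apply Subtype.ext
    show (o i * y i) * (o i * y i) = 0
    have h1 : y i * o i = -(o i * y i) := S.comm_oo _ (hy i) _ (ho i)
    have h2 : (o i * y i) * (o i * y i) = o i * (y i * o i) * y i := by
      simp [mul_assoc]
    rw [h2, h1]
    simp [mul_neg, neg_mul, ← mul_assoc, hosq _ (ho i)]
  -- a equals the sum of the f i
  have hz : ((∑ i, f i : S.evSub) : A) = ∑ i, o i * y i := by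
    simp [hf]
  have hw : (a : A) - ∑ i, o i * y i = ∑ i, e i * y i := by
    rw [← hc]
    rw [← Finset.sum_sub_distrib]
    congr 1; funext i
    rw [hc' i, smul_eq_mul, add_mul, add_sub_cancel_right]
  have hwod : ((a : A) - ∑ i, o i * y i) ∈ S.od := by
    rw [hw]
    exact Submodule.sum_mem _ (fun i _ => S.mul_eo _ (he i) _ (hy i))
  have hwev : ((a : A) - ∑ i, o i * y i) ∈ S.ev :=
    S.ev.sub_mem a.2 (Submodule.sum_mem _ (fun i _ => hmemev i))
  have hw0 : (a : A) - ∑ i, o i * y i = 0 := by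
    have : (a : A) - ∑ i, o i * y i ∈ S.ev ⊓ S.od := ⟨hwev, hwod⟩
    rwa [S.inf_eq_bot, Submodule.mem_bot] at this
  have ha_eq : a = ∑ i, f i := by
    apply Subtype.ext
    rw [hz]
    exact sub_eq_zero.mp hw0
  rw [mem_nilradical, ha_eq]
  exact isNilpotent_sum (fun i _ => ⟨2, by rw [pow_two, hfsq i]⟩)
end

section
/- Let A be a supercommutative superalgebra over a field of characteristic ≠ 2, with A₀ Noetherian of finite Krull dimension d and A₁ a finitely generated A₀-module, and let a₁, …, a_k ∈ A₀ generate the unit ideal of A₀. Let J = { i : Kdim((A₀)_{a_i}) = d }. Then the odd Krull dimension of A equals max over i ∈ J of the odd Krull dimension of the localization A_{a_i}. (Here the odd Krull dimension Ksdim₁ is the maximal length t of a system of odd elements y₁,…,y_t with Kdim(A₀/Ann_{A₀}(y₁⋯y_t)) = Kdim(A₀), and Ksdim₁ = 0 if no such system of positive length exists.) -/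
variable {k A : Type} [Field k] [Ring A] [Algebra k A]

/-- `y₁, …, y_t` is a system of odd parameters of `S`:
odd elements with `Kdim (A₀ / Ann_{A₀}(y₁⋯y_t)) = Kdim A₀`. -/
def SuperAlg.IsOddParams (S : SuperAlg k A) {t : ℕ} (y : Fin t → A) : Prop :=
  (∀ i, y i ∈ S.od) ∧
  ringKrullDim (S.evSub ⧸ S.annEv (List.ofFn y).prod) = ringKrullDim S.evSub

/-- The odd Krull dimension `Ksdim₁` of `S`: the maximal length of a system of odd
parameters (`0` if there is none of positive length). -/
noncomputable def SuperAlg.ksdim1 (S : SuperAlg k A) : ℕ :=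
  sSup {t : ℕ | ∃ y : Fin t → A, S.IsOddParams y}


/-! ### Auxiliary lemmas -/

theorem SuperAlg.eq_zero_of_mem_both (S : SuperAlg k A) {x : A}
    (h1 : x ∈ S.ev) (h2 : x ∈ S.od) : x = 0 := by
  have hx : x ∈ S.ev ⊓ S.od := ⟨h1, h2⟩
  rw [S.inf_eq_bot] at hx
  simpa using hx

theorem SuperAlg.decomp (S : SuperAlg k A) (x : A) :
    ∃ x0 ∈ S.ev, ∃ x1 ∈ S.od, x = x0 + x1 := by
  have hx : x ∈ S.ev ⊔ S.od := by rw [S.sup_eq_top]; trivial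
  obtain ⟨x0, h0, x1, h1, h⟩ := Submodule.mem_sup.mp hx
  exact ⟨x0, h0, x1, h1, h.symm⟩

theorem SuperAlg.even_comm (S : SuperAlg k A) {c : A} (hc : c ∈ S.ev) (b : A) :
    c * b = b * c := by
  obtain ⟨b0, h0, b1, h1, rfl⟩ := S.decomp b
  rw [mul_add, add_mul, S.comm_ee c hc b0 h0, S.comm_eo c hc b1 h1]

theorem SuperAlg.odd_sq (S : SuperAlg k A) (hchar : (2:k) ≠ 0) {y : A}
    (hy : y ∈ S.od) : y * y = 0 := by
  have h := S.comm_oo y hy y hy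
  have h2 : y * y + y * y = 0 := eq_neg_iff_add_eq_zero.mp h
  have h3 : (algebraMap k A 2) * (y*y) = 0 := by
    rw [map_ofNat, two_mul]; exact h2
  have hinv : algebraMap k A (2⁻¹) * algebraMap k A 2 = 1 := by
    rw [← map_mul, inv_mul_cancel₀ hchar, map_one]
  calc y*y = (algebraMap k A (2⁻¹) * algebraMap k A 2) * (y*y) := by rw [hinv, one_mul]
    _ = algebraMap k A (2⁻¹) * ((algebraMap k A 2) * (y*y)) := by rw [mul_assoc]
    _ = 0 := by rw [h3, mul_zero]

theorem SuperAlg.odd_mul_prod (S : SuperAlg k A) (hchar : (2:k) ≠ 0) {m : ℕ}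
    {yg : Fin m → A} (hyg : ∀ i, yg i ∈ S.od) :
    ∀ (l : List (Fin m)) (i : Fin m), i ∈ l → yg i * (l.map yg).prod = 0 := by
  intro l
  induction l with
  | nil => intro i h; simp at h
  | cons j l ih =>
    intro i hi
    rw [List.map_cons, List.prod_cons]
    rcases List.mem_cons.mp hi with h | h
    · subst h
      rw [← mul_assoc, S.odd_sq hchar (hyg i), zero_mul]
    · have hanti : yg i * yg j = -(yg j * yg i) := S.comm_oo _ (hyg i) _ (hyg j)
      rw [← mul_assoc, hanti, neg_mul, mul_assoc, ih i h, mul_zero, neg_zero]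

theorem SuperAlg.prod_dup_zero (S : SuperAlg k A) (hchar : (2:k) ≠ 0) {m : ℕ}
    {yg : Fin m → A} (hyg : ∀ i, yg i ∈ S.od) :
    ∀ (l : List (Fin m)), ¬ l.Nodup → (l.map yg).prod = 0 := by
  intro l
  induction l with
  | nil => intro h; exact absurd List.nodup_nil h
  | cons j l ih =>
    intro h
    rw [List.map_cons, List.prod_cons]
    rw [List.nodup_cons] at h
    by_cases hj : j ∈ l
    · rw [S.odd_mul_prod hchar hyg l j hj]
    · have hnd : ¬ l.Nodup := fun hn => h ⟨hj, hn⟩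
      rw [ih hnd, mul_zero]

theorem SuperAlg.prod_odd_mem (S : SuperAlg k A) (hchar : (2:k) ≠ 0) {m : ℕ}
    {yg : Fin m → A} (hyg : ∀ i, yg i ∈ S.od)
    (hgen : ∀ b ∈ S.od, b ∈ Submodule.span k {x : A | ∃ c ∈ S.ev, ∃ i : Fin m, x = c * yg i}) :
    ∀ (t : ℕ) (y : Fin t → A), (∀ j, y j ∈ S.od) →
      (List.ofFn y).prod ∈ Submodule.span k
        {x : A | ∃ c ∈ S.ev, ∃ l : List (Fin m), l.length = t ∧ x = c * (l.map yg).prod} := by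
  intro t
  induction t with
  | zero =>
    intro y _
    apply Submodule.subset_span
    exact ⟨1, S.one_mem, [], rfl, by simp⟩
  | succ t ih =>
    intro y hy
    rw [List.ofFn_succ, List.prod_cons]
    have h0 := hgen (y 0) (hy 0)
    have hrest := ih (fun j => y j.succ) (fun j => hy j.succ)
    revert hrest
    generalize (List.ofFn fun j : Fin t => y j.succ).prod = R
    intro hrest
    have key : ∀ u ∈ Submodule.span k {x : A | ∃ c ∈ S.ev, ∃ i : Fin m, x = c * yg i},
        ∀ v ∈ Submodule.span k
          {x : A | ∃ c ∈ S.ev, ∃ l : List (Fin m), l.length = t ∧ x = c * (l.map yg).prod},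
        u * v ∈ Submodule.span k
          {x : A | ∃ c ∈ S.ev, ∃ l : List (Fin m), l.length = t + 1 ∧ x = c * (l.map yg).prod} := by
      intro u hu
      induction hu using Submodule.span_induction with
      | mem u hu =>
        obtain ⟨c, hc, i, rfl⟩ := hu
        intro v hv
        induction hv using Submodule.span_induction with
        | mem v hv =>
          obtain ⟨c', hc', l, hl, rfl⟩ := hv
          apply Submodule.subset_span
          refine ⟨c * c', S.mul_ee _ hc _ hc', i :: l, by simp [hl], ?_⟩
          have hswap : yg i * c' = c' * yg i := (S.even_comm hc' _).symm
          rw [List.map_cons, List.prod_cons]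
          calc c * yg i * (c' * (l.map yg).prod)
              = c * (yg i * c' * (l.map yg).prod) := by
                rw [mul_assoc c (yg i), mul_assoc (yg i)]
            _ = c * (c' * yg i * (l.map yg).prod) := by rw [hswap]
            _ = c * c' * (yg i * (l.map yg).prod) := by
                rw [mul_assoc c' (yg i), ← mul_assoc c c']
        | zero => rw [mul_zero]; exact zero_mem _
        | add v w _ _ hv hw => rw [mul_add]; exact add_mem hv hw
        | smul r v _ hv => rw [mul_smul_comm]; exact Submodule.smul_mem _ _ hv
      | zero => intro v _; rw [zero_mul]; exact zero_mem _
      | add u w _ _ hu hw => intro v hv; rw [add_mul]; exact add_mem (hu v hv) (hw v hv)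
      | smul r u _ hu => intro v hv; rw [smul_mul_assoc]; exact Submodule.smul_mem _ _ (hu v hv)
    exact key _ h0 _ hrest

theorem SuperAlg.prod_odd_eq_zero (S : SuperAlg k A) (hchar : (2:k) ≠ 0) {m : ℕ}
    {yg : Fin m → A} (hyg : ∀ i, yg i ∈ S.od)
    (hgen : ∀ b ∈ S.od, b ∈ Submodule.span k {x : A | ∃ c ∈ S.ev, ∃ i : Fin m, x = c * yg i})
    {t : ℕ} (ht : m < t) (y : Fin t → A) (hy : ∀ j, y j ∈ S.od) :
    (List.ofFn y).prod = 0 := by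
  have h := S.prod_odd_mem hchar hyg hgen t y hy
  have hsub : {x : A | ∃ c ∈ S.ev, ∃ l : List (Fin m), l.length = t ∧ x = c * (l.map yg).prod}
      ⊆ {0} := by
    rintro x ⟨c, hc, l, hl, rfl⟩
    have hnd : ¬ l.Nodup := by
      intro hn
      have h2 := List.Nodup.length_le_card hn
      rw [hl, Fintype.card_fin] at h2
      omega
    rw [S.prod_dup_zero hchar hyg l hnd, mul_zero]; rfl
  have h2 := Submodule.span_mono hsub h
  rw [Submodule.span_zero_singleton] at h2
  simpa using h2

theorem SuperAlg.mem_annEv (S : SuperAlg k A) {p : A} {x : S.evSub} :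
    x ∈ S.annEv p ↔ (x : A) * p = 0 := Iff.rfl

theorem SuperAlg.isUnit_lift (S : SuperAlg k A) {x : S.evSub} (h : IsUnit (x : A)) :
    IsUnit x := by
  obtain ⟨u, hu0⟩ := h
  have hu : (x:A) * ↑u⁻¹ = 1 := by rw [← hu0]; exact u.mul_inv
  obtain ⟨u0, h0, u1, h1, hdec⟩ := S.decomp (↑u⁻¹ : A)
  rw [hdec, mul_add] at hu
  have hxev : (x : A) ∈ S.ev := x.2
  have he : (x:A) * u0 ∈ S.ev := S.mul_ee _ hxev _ h0
  have ho : (x:A) * u1 ∈ S.od := S.mul_eo _ hxev _ h1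
  have hz : (x:A) * u1 = 0 := by
    refine S.eq_zero_of_mem_both ?_ ho
    have heq : (x:A)*u1 = 1 - (x:A)*u0 := eq_sub_of_add_eq' hu
    rw [heq]
    exact S.ev.sub_mem S.one_mem he
  rw [hz, add_zero] at hu
  exact isUnit_iff_exists_inv.mpr ⟨⟨u0, h0⟩, Subtype.ext (by push_cast; exact hu)⟩

theorem SuperAlg.isOddParams_zero (S : SuperAlg k A) :
    S.IsOddParams (fun _ : Fin 0 => (0:A)) := by
  constructor
  · exact fun i => i.elim0
  · have h1 : (List.ofFn (fun _ : Fin 0 => (0:A))).prod = 1 := by simp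
    rw [h1]
    have hbot : S.annEv (1:A) = ⊥ := by
      ext x
      rw [S.mem_annEv, mul_one, Ideal.mem_bot]
      exact ⟨fun h => Subtype.ext h, fun h => by rw [h]; rfl⟩
    rw [hbot]
    exact ringKrullDim_eq_of_ringEquiv (RingEquiv.quotientBot _)

/-- If a ring `A'` has the property that long products of odd elements vanish,
then systems of odd parameters have length at most `m`. -/
theorem oddParams_le' {A' : Type} [Ring A'] [Algebra k A'] (S' : SuperAlg k A') {d : ℕ}
    (hd : ringKrullDim S'.evSub = d) {m : ℕ}
    (hzero : ∀ t, m < t → ∀ y : Fin t → A', (∀ j, y j ∈ S'.od) → (List.ofFn y).prod = 0)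
    {t : ℕ} {y : Fin t → A'} (h : S'.IsOddParams y) : t ≤ m := by
  by_contra hc
  push_neg at hc
  obtain ⟨h1, h2⟩ := h
  rw [hzero t hc y h1] at h2
  have htop : S'.annEv (0:A') = ⊤ := by
    ext x
    simp [S'.mem_annEv]
  rw [htop] at h2
  haveI : Subsingleton (S'.evSub ⧸ (⊤ : Ideal S'.evSub)) :=
    Ideal.Quotient.subsingleton_iff.mpr rfl
  rw [ringKrullDim_eq_bot_of_subsingleton, hd] at h2
  exact absurd h2.symm (by simp)

section KrullAux

theorem exists_chain_of_krullDim_eq {α : Type} [Preorder α] {d : ℕ}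
    (h : Order.krullDim α = d) : ∃ p : LTSeries α, p.length = d := by
  have hne : Nonempty α := by
    by_contra hn
    rw [not_nonempty_iff] at hn
    rw [Order.krullDim_eq_bot] at h
    exact absurd h (by simp)
  by_contra hc
  push_neg at hc
  have hle : ∀ p : LTSeries α,
      (p.length : WithBot (WithTop ℕ)) ≤ ((d - 1 : ℕ) : WithBot (WithTop ℕ)) := by
    intro p
    have h1 : (p.length : WithBot (WithTop ℕ)) ≤ d := h ▸ Order.LTSeries.length_le_krullDim p
    have h3 : p.length ≤ d := by exact_mod_cast h1
    have h4 : p.length ≤ d - 1 := by have := hc p; omega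
    exact_mod_cast h4
  have h5 : Order.krullDim α ≤ ((d - 1 : ℕ) : WithBot (WithTop ℕ)) := by
    rw [Order.krullDim]
    exact iSup_le fun p => hle p
  rw [h] at h5
  have h6 : d ≤ d - 1 := ENat.coe_le_coe.mp (WithBot.coe_le_coe.mp h5)
  have hd0 : d = 0 := by omega
  subst hd0
  obtain ⟨x⟩ := hne
  exact hc ⟨0, fun _ => x, fun i => i.elim0⟩ rfl

theorem exists_chain_of_ringKrullDim_eq {R : Type} [CommRing R] {d : ℕ}
    (h : ringKrullDim R = d) : ∃ p : LTSeries (PrimeSpectrum R), p.length = d :=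
  exists_chain_of_krullDim_eq h

theorem locAway_dim_le {R S' : Type} [CommRing R] [CommRing S'] [Algebra R S'] (a : R)
    [IsLocalization.Away a S'] : ringKrullDim S' ≤ ringKrullDim R := by
  apply Order.krullDim_le_of_strictMono (PrimeSpectrum.comap (algebraMap R S'))
  intro p q hpq
  exact (IsLocalization.orderIsoOfPrime (Submonoid.powers a) S').lt_iff_lt.mpr
    (show (⟨p.asIdeal, p.2⟩ : {p : Ideal S' // p.IsPrime}) < ⟨q.asIdeal, q.2⟩ from hpq)

theorem locAway_dim_ge {R S' : Type} [CommRing R] [CommRing S'] [Algebra R S'] (a : R)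
    [IsLocalization.Away a S'] (c : LTSeries (PrimeSpectrum R))
    (ha : a ∉ c.last.asIdeal) :
    (c.length : WithBot (WithTop ℕ)) ≤ ringKrullDim S' := by
  have hdisj : ∀ j : Fin (c.length + 1),
      Disjoint ((Submonoid.powers a : Submonoid R) : Set R) ((c.toFun j).asIdeal : Set R) := by
    intro j
    rw [Set.disjoint_left]
    rintro x ⟨e, rfl⟩ hx
    have hle : c.toFun j ≤ c.last := c.monotone (Fin.le_last j)
    exact ha (c.last.isPrime.mem_of_pow_mem e (hle hx))
  let iso := IsLocalization.orderIsoOfPrime (Submonoid.powers a) S'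
  let g : Fin (c.length + 1) → PrimeSpectrum S' := fun j =>
    ⟨(iso.symm ⟨(c.toFun j).asIdeal, (c.toFun j).isPrime, hdisj j⟩).1,
     (iso.symm ⟨(c.toFun j).asIdeal, (c.toFun j).isPrime, hdisj j⟩).2⟩
  have hg : StrictMono g := by
    intro i j hij
    have h1 : (⟨(c.toFun i).asIdeal, (c.toFun i).isPrime, hdisj i⟩ :
        {p : Ideal R // p.IsPrime ∧ Disjoint ((Submonoid.powers a : Submonoid R) : Set R) (p : Set R)}) <
        ⟨(c.toFun j).asIdeal, (c.toFun j).isPrime, hdisj j⟩ := by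
      exact Subtype.mk_lt_mk.mpr (c.strictMono hij)
    have h2 := iso.symm.strictMono h1
    exact Subtype.coe_lt_coe.mpr h2
  have hser : ∀ i : Fin c.length, g i.castSucc < g i.succ :=
    fun i => hg (Fin.castSucc_lt_succ (i := i))
  have := Order.LTSeries.length_le_krullDim (⟨c.length, g, hser⟩ : LTSeries (PrimeSpectrum S'))
  exact this

theorem exists_not_mem_of_span_top {R Q : Type} [CommRing R] [CommRing Q] {n : ℕ}
    (a : Fin n → R) (hspan : Ideal.span (Set.range a) = ⊤) (f : R →+* Q)
    (P : Ideal Q) (hP : P.IsPrime) : ∃ i, f (a i) ∉ P := by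
  by_contra hc
  push_neg at hc
  have h1 : (1 : R) ∈ Ideal.span (Set.range a) := by rw [hspan]; trivial
  have h2 : f 1 ∈ Ideal.map f (Ideal.span (Set.range a)) := Ideal.mem_map_of_mem f h1
  rw [Ideal.map_span] at h2
  have h3 : Ideal.span (f '' Set.range a) ≤ P := by
    rw [Ideal.span_le]
    rintro x ⟨y, ⟨i, rfl⟩, rfl⟩
    exact hc i
  have h4 := h3 h2
  rw [map_one] at h4
  exact hP.ne_top ((Ideal.eq_top_iff_one P).mpr h4)

theorem mkLocAway {R S' : Type} [CommRing R] [CommRing S'] (f : R →+* S') (a : R)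
    (h1 : IsUnit (f a))
    (h2 : ∀ b : S', ∃ x : R, ∃ e : ℕ, b * f (a ^ e) = f x)
    (h3 : ∀ x : R, f x = 0 ↔ ∃ e : ℕ, a ^ e * x = 0) :
    @IsLocalization R _ (Submonoid.powers a) S' _ f.toAlgebra := by
  letI := f.toAlgebra
  have halg : (algebraMap R S' : R →+* S') = f := rfl
  constructor
  constructor
  · rintro ⟨y, e, rfl⟩
    show IsUnit (algebraMap R S' (a ^ e))
    rw [halg, map_pow]
    exact h1.pow e
  · intro z
    obtain ⟨x, e, hx⟩ := h2 z
    refine ⟨(x, ⟨a^e, ⟨e, rfl⟩⟩), ?_⟩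
    show z * algebraMap R S' (a ^ e) = algebraMap R S' x
    rw [halg]
    exact hx
  · intro x y hxy
    have hz : f (x - y) = 0 := by
      rw [map_sub, sub_eq_zero]
      exact hxy
    obtain ⟨e, he⟩ := (h3 _).mp hz
    refine ⟨⟨a^e, ⟨e, rfl⟩⟩, ?_⟩
    show a ^ e * x = a ^ e * y
    rw [← sub_eq_zero, ← mul_sub]
    exact he

theorem prod_mul_central {R : Type} [Ring R] :
    ∀ (t : ℕ) (z u : Fin t → R), (∀ j, ∀ x, u j * x = x * u j) →
      (List.ofFn (fun j => z j * u j)).prod = (List.ofFn z).prod * (List.ofFn u).prod := by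
  intro t
  induction t with
  | zero => intro z u _; simp
  | succ t ih =>
    intro z u h
    rw [List.ofFn_succ (f := fun j => z j * u j), List.ofFn_succ (f := z),
      List.ofFn_succ (f := u), List.prod_cons, List.prod_cons, List.prod_cons]
    rw [ih (fun j => z j.succ) (fun j => u j.succ) (fun j => h j.succ)]
    generalize (List.ofFn fun j : Fin t => z j.succ).prod = Z
    generalize (List.ofFn fun j : Fin t => u j.succ).prod = U
    calc z 0 * u 0 * (Z * U) = z 0 * (u 0 * Z * U) := by
          rw [mul_assoc (z 0), mul_assoc (u 0)]
      _ = z 0 * (Z * u 0 * U) := by rw [h 0 Z]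
      _ = z 0 * Z * (u 0 * U) := by rw [mul_assoc Z (u 0) U, ← mul_assoc (z 0) Z]

end KrullAux

/-! ### The even-part map of a graded algebra map, and localization properties -/

def SuperAlg.evMap (S : SuperAlg k A) {B : Type} [Ring B] [Algebra k B] (T : SuperAlg k B)
    (φ : A →ₐ[k] B) (hev : ∀ x ∈ S.ev, φ x ∈ T.ev) : S.evSub →+* T.evSub where
  toFun x := ⟨φ x, hev x x.2⟩
  map_one' := Subtype.ext (by simp)
  map_mul' x y := Subtype.ext (by push_cast; simp)
  map_zero' := Subtype.ext (by simp)
  map_add' x y := Subtype.ext (by push_cast; simp)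

theorem SuperAlg.evMap_apply (S : SuperAlg k A) {B : Type} [Ring B] [Algebra k B]
    (T : SuperAlg k B) (φ : A →ₐ[k] B) (hev : ∀ x ∈ S.ev, φ x ∈ T.ev) (x : S.evSub) :
    (S.evMap T φ hev x : B) = φ x := rfl

section Loc

variable {B : Type} [Ring B] [Algebra k B]
variable (S : SuperAlg k A) (T : SuperAlg k B) (φ : A →ₐ[k] B)
variable (hev : ∀ x ∈ S.ev, φ x ∈ T.ev) (a0 : S.evSub)
variable (hu : IsUnit (φ (a0 : A)))
variable (hsurj_ev : ∀ b ∈ T.ev, ∃ x ∈ S.ev, ∃ e : ℕ, b * φ ((a0:A) ^ e) = φ x)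
variable (hker : ∀ x : A, φ x = 0 ↔ ∃ e : ℕ, (a0:A) ^ e * x = 0)

include hev a0 hu hsurj_ev hker in
theorem SuperAlg.evMap_isLoc :
    @IsLocalization S.evSub _ (Submonoid.powers a0) T.evSub _ (S.evMap T φ hev).toAlgebra := by
  apply mkLocAway
  · exact T.isUnit_lift (show IsUnit ((S.evMap T φ hev a0 : T.evSub) : B) from hu)
  · intro b
    obtain ⟨x, hx, e, he⟩ := hsurj_ev (b : B) b.2
    refine ⟨⟨x, hx⟩, e, Subtype.ext ?_⟩
    push_cast
    rw [S.evMap_apply, S.evMap_apply]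
    push_cast
    exact he
  · intro x
    rw [show ((0 : T.evSub) = ⟨0, (T.evSub).zero_mem⟩) from rfl]
    rw [Subtype.ext_iff]
    rw [S.evMap_apply]
    rw [hker]
    constructor
    · rintro ⟨e, he⟩
      refine ⟨e, Subtype.ext ?_⟩
      push_cast
      exact he
    · rintro ⟨e, he⟩
      refine ⟨e, ?_⟩
      have := congrArg (Subtype.val) he
      push_cast at this
      exact this

include hev a0 hu hsurj_ev hker in
theorem SuperAlg.dim_ev_le : ringKrullDim T.evSub ≤ ringKrullDim S.evSub := by
  letI := (S.evMap T φ hev).toAlgebra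
  haveI := S.evMap_isLoc T φ hev a0 hu hsurj_ev hker
  exact locAway_dim_le (a0 : S.evSub)

include hev a0 hu hsurj_ev hker in
theorem SuperAlg.dim_ev_ge (c : LTSeries (PrimeSpectrum S.evSub))
    (ha : a0 ∉ c.last.asIdeal) :
    (c.length : WithBot (WithTop ℕ)) ≤ ringKrullDim T.evSub := by
  letI := (S.evMap T φ hev).toAlgebra
  haveI := S.evMap_isLoc T φ hev a0 hu hsurj_ev hker
  exact locAway_dim_ge a0 c ha

variable (p : A)

theorem SuperAlg.evMap_ann (x : S.evSub) (hx : x ∈ S.annEv p) :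
    S.evMap T φ hev x ∈ T.annEv (φ p) := by
  rw [T.mem_annEv, S.evMap_apply, ← map_mul]
  rw [S.mem_annEv] at hx
  rw [hx, map_zero]

noncomputable def SuperAlg.qMap : (S.evSub ⧸ S.annEv p) →+* (T.evSub ⧸ T.annEv (φ p)) :=
  Ideal.Quotient.lift (S.annEv p)
    ((Ideal.Quotient.mk (T.annEv (φ p))).comp (S.evMap T φ hev))
    (fun x hx => by
      rw [RingHom.comp_apply, Ideal.Quotient.eq_zero_iff_mem]
      exact S.evMap_ann T φ hev p x hx)

theorem SuperAlg.qMap_mk (x : S.evSub) :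
    S.qMap T φ hev p (Ideal.Quotient.mk (S.annEv p) x)
      = Ideal.Quotient.mk (T.annEv (φ p)) (S.evMap T φ hev x) := rfl

include hev a0 hu hsurj_ev hker in
theorem SuperAlg.qMap_isLoc :
    @IsLocalization (S.evSub ⧸ S.annEv p) _
      (Submonoid.powers (Ideal.Quotient.mk (S.annEv p) a0))
      (T.evSub ⧸ T.annEv (φ p)) _ (S.qMap T φ hev p).toAlgebra := by
  apply mkLocAway
  · rw [S.qMap_mk]
    refine IsUnit.map _ ?_
    exact T.isUnit_lift (show IsUnit ((S.evMap T φ hev a0 : T.evSub) : B) from hu)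
  · intro b
    obtain ⟨b0, rfl⟩ := Ideal.Quotient.mk_surjective b
    obtain ⟨x, hx, e, he⟩ := hsurj_ev (b0 : B) b0.2
    refine ⟨Ideal.Quotient.mk (S.annEv p) ⟨x, hx⟩, e, ?_⟩
    rw [← map_pow, S.qMap_mk, S.qMap_mk, ← map_mul]
    congr 1
    apply Subtype.ext
    push_cast
    rw [S.evMap_apply, S.evMap_apply]
    push_cast
    exact he
  · intro x
    obtain ⟨x0, rfl⟩ := Ideal.Quotient.mk_surjective x
    rw [S.qMap_mk, Ideal.Quotient.eq_zero_iff_mem, T.mem_annEv, S.evMap_apply, ← map_mul,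
      hker]
    constructor
    · rintro ⟨e, he⟩
      refine ⟨e, ?_⟩
      rw [← map_pow, ← map_mul, Ideal.Quotient.eq_zero_iff_mem, S.mem_annEv]
      push_cast
      rw [mul_assoc]
      exact he
    · rintro ⟨e, he⟩
      refine ⟨e, ?_⟩
      rw [← map_pow, ← map_mul, Ideal.Quotient.eq_zero_iff_mem, S.mem_annEv] at he
      push_cast at he
      rw [mul_assoc] at he
      exact he

include hev a0 hu hsurj_ev hker in
theorem SuperAlg.dim_q_le :
    ringKrullDim (T.evSub ⧸ T.annEv (φ p)) ≤ ringKrullDim (S.evSub ⧸ S.annEv p) := by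
  letI := (S.qMap T φ hev p).toAlgebra
  haveI := S.qMap_isLoc T φ hev a0 hu hsurj_ev hker p
  exact locAway_dim_le (Ideal.Quotient.mk (S.annEv p) a0)

include hev a0 hu hsurj_ev hker in
theorem SuperAlg.dim_q_ge (c : LTSeries (PrimeSpectrum (S.evSub ⧸ S.annEv p)))
    (ha : Ideal.Quotient.mk (S.annEv p) a0 ∉ c.last.asIdeal) :
    (c.length : WithBot (WithTop ℕ)) ≤ ringKrullDim (T.evSub ⧸ T.annEv (φ p)) := by
  letI := (S.qMap T φ hev p).toAlgebra
  haveI := S.qMap_isLoc T φ hev a0 hu hsurj_ev hker p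
  exact locAway_dim_ge (Ideal.Quotient.mk (S.annEv p) a0) c ha


include hev a0 hu in
theorem SuperAlg.prod_odd_zero_loc (hchar : (2:k) ≠ 0) {m : ℕ}
    {yg : Fin m → A} (hyg : ∀ i, yg i ∈ S.od)
    (hgen : ∀ b ∈ S.od, b ∈ Submodule.span k {x : A | ∃ c ∈ S.ev, ∃ i : Fin m, x = c * yg i})
    (hsurj_od : ∀ b ∈ T.od, ∃ x ∈ S.od, ∃ e : ℕ, b * φ ((a0:A) ^ e) = φ x)
    {t : ℕ} (ht : m < t) (z : Fin t → B) (hz : ∀ j, z j ∈ T.od) :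
    (List.ofFn z).prod = 0 := by
  choose x hx e he using fun j => hsurj_od (z j) (hz j)
  have haev : ∀ j : Fin t, φ ((a0:A) ^ (e j)) ∈ T.ev := by
    intro j
    exact hev _ (pow_mem a0.2 (e j))
  have hcent : ∀ j : Fin t, ∀ w : B, φ ((a0:A) ^ (e j)) * w = w * φ ((a0:A) ^ (e j)) :=
    fun j w => T.even_comm (haev j) w
  have h1 : (List.ofFn fun j => z j * φ ((a0:A) ^ (e j))).prod
      = (List.ofFn z).prod * (List.ofFn fun j => φ ((a0:A) ^ (e j))).prod :=
    prod_mul_central t _ _ hcent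
  have h2 : (List.ofFn fun j => z j * φ ((a0:A) ^ (e j))).prod = φ ((List.ofFn x).prod) := by
    have hfn : (fun j => z j * φ ((a0:A) ^ (e j))) = fun j => φ (x j) := funext he
    rw [hfn, map_list_prod, List.map_ofFn]
    rfl
  have hx0 : (List.ofFn x).prod = 0 := S.prod_odd_eq_zero hchar hyg hgen ht x hx
  rw [hx0, map_zero] at h2
  rw [h2] at h1
  have hUu : IsUnit ((List.ofFn fun j => φ ((a0:A) ^ (e j))).prod) := by
    apply List.prod_isUnit
    intro w hw
    rw [List.mem_ofFn] at hw
    obtain ⟨j, rfl⟩ := hw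
    show IsUnit (φ ((a0:A) ^ e j))
    rw [map_pow]
    exact hu.pow _
  exact (hUu.mul_left_eq_zero).mp h1.symm

end Loc

/-- let `A` be a Noetherian supercommutative superalgebra with
`Kdim A₀ = d` and let `a₁, …, a_n` be even elements generating the unit ideal of `A₀`.
If `φᵢ : A → Bᵢ` are the localizations of `A` at the (central, even) elements `aᵢ`,
then `Ksdim₁ A = max { Ksdim₁ Bᵢ : Kdim (Bᵢ)₀ = d }`. -/
theorem ksdim1_eq_sup_localizations (hchar : (2 : k) ≠ 0) (S : SuperAlg k A)
    (hnoeth : IsNoetherianRing S.evSub) (d : ℕ) (hd : ringKrullDim S.evSub = d)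
    (m : ℕ) (yg : Fin m → A) (hyg : ∀ i, yg i ∈ S.od)
    (hgen : ∀ b ∈ S.od,
      b ∈ Submodule.span k {x : A | ∃ c ∈ S.ev, ∃ i : Fin m, x = c * yg i})
    (n : ℕ) (a : Fin n → S.evSub) (hunit : Ideal.span (Set.range a) = ⊤)
    (B : Fin n → Type) [∀ i, Ring (B i)] [∀ i, Algebra k (B i)]
    (T : ∀ i, SuperAlg k (B i)) (φ : ∀ i, A →ₐ[k] B i)
    -- `φ i` preserves the grading:
    (hev : ∀ i, ∀ x ∈ S.ev, φ i x ∈ (T i).ev)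
    (hod : ∀ i, ∀ x ∈ S.od, φ i x ∈ (T i).od)
    -- `φ i` is the localization of `A` at the even (hence central) element `a i`:
    (hu : ∀ i, IsUnit (φ i (a i : A)))
    (hsurj_ev : ∀ i, ∀ b ∈ (T i).ev, ∃ x ∈ S.ev, ∃ e : ℕ, b * φ i ((a i : A) ^ e) = φ i x)
    (hsurj_od : ∀ i, ∀ b ∈ (T i).od, ∃ x ∈ S.od, ∃ e : ℕ, b * φ i ((a i : A) ^ e) = φ i x)
    (hker : ∀ i, ∀ x : A, φ i x = 0 ↔ ∃ e : ℕ, (a i : A) ^ e * x = 0) :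
    S.ksdim1 = sSup {t : ℕ | ∃ i : Fin n,
      ringKrullDim (T i).evSub = (d : WithBot (WithTop ℕ)) ∧ t = (T i).ksdim1} := by
  classical
  have hzeroA : ∀ t, m < t → ∀ y : Fin t → A, (∀ j, y j ∈ S.od) → (List.ofFn y).prod = 0 :=
    fun t ht y hy => S.prod_odd_eq_zero hchar hyg hgen ht y hy
  have hzeroB : ∀ i : Fin n, ∀ t, m < t → ∀ z : Fin t → B i, (∀ j, z j ∈ (T i).od) →
      (List.ofFn z).prod = 0 :=
    fun i t ht z hz => S.prod_odd_zero_loc (T i) (φ i) (hev i) (a i) (hu i) hchar hyg hgen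
      (hsurj_od i) ht z hz
  have hLm : ∀ t ∈ {t : ℕ | ∃ y : Fin t → A, S.IsOddParams y}, t ≤ m := by
    rintro t ⟨y, hy⟩
    exact oddParams_le' S hd hzeroA hy
  have hL0 : 0 ∈ {t : ℕ | ∃ y : Fin t → A, S.IsOddParams y} := ⟨_, S.isOddParams_zero⟩
  have hLbdd : BddAbove {t : ℕ | ∃ y : Fin t → A, S.IsOddParams y} := ⟨m, hLm⟩
  have hSIm : ∀ i : Fin n, ringKrullDim (T i).evSub = (d : WithBot (WithTop ℕ)) →
      ∀ t ∈ {t : ℕ | ∃ z : Fin t → B i, (T i).IsOddParams z}, t ≤ m := by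
    rintro i hdi t ⟨z, hz⟩
    exact oddParams_le' (T i) hdi (hzeroB i) hz
  have hSI0 : ∀ i : Fin n, 0 ∈ {t : ℕ | ∃ z : Fin t → B i, (T i).IsOddParams z} :=
    fun i => ⟨_, (T i).isOddParams_zero⟩
  have hRsm : ∀ r ∈ {t : ℕ | ∃ i : Fin n,
      ringKrullDim (T i).evSub = (d : WithBot (WithTop ℕ)) ∧ t = (T i).ksdim1}, r ≤ m := by
    rintro r ⟨i, hdi, rfl⟩
    exact csSup_le ⟨0, hSI0 i⟩ (hSIm i hdi)
  have hRsbdd : BddAbove {t : ℕ | ∃ i : Fin n,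
      ringKrullDim (T i).evSub = (d : WithBot (WithTop ℕ)) ∧ t = (T i).ksdim1} := ⟨m, hRsm⟩
  -- nonemptiness of the right-hand set
  obtain ⟨c0, hc0⟩ := exists_chain_of_ringKrullDim_eq hd
  obtain ⟨i0, hi0⟩ := exists_not_mem_of_span_top a hunit (RingHom.id _) c0.last.asIdeal
    c0.last.isPrime
  have hdi0 : ringKrullDim (T i0).evSub = (d : WithBot (WithTop ℕ)) := by
    apply le_antisymm
    · refine le_of_le_of_eq ?_ hd
      exact S.dim_ev_le (T i0) (φ i0) (hev i0) (a i0) (hu i0) (hsurj_ev i0) (hker i0)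
    · rw [← hc0]
      exact S.dim_ev_ge (T i0) (φ i0) (hev i0) (a i0) (hu i0) (hsurj_ev i0) (hker i0) c0
        (by simpa using hi0)
  have hRsne : ((T i0).ksdim1 : ℕ) ∈ {t : ℕ | ∃ i : Fin n,
      ringKrullDim (T i).evSub = (d : WithBot (WithTop ℕ)) ∧ t = (T i).ksdim1} :=
    ⟨i0, hdi0, rfl⟩
  rw [SuperAlg.ksdim1]
  apply le_antisymm
  · apply csSup_le ⟨0, hL0⟩
    rintro t ⟨y, hy⟩
    have hqd : ringKrullDim (S.evSub ⧸ S.annEv (List.ofFn y).prod)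
        = (d : WithBot (WithTop ℕ)) := by rw [hy.2, hd]; rfl
    obtain ⟨c, hc⟩ := exists_chain_of_ringKrullDim_eq hqd
    obtain ⟨i, hi⟩ := exists_not_mem_of_span_top a hunit
      (Ideal.Quotient.mk (S.annEv (List.ofFn y).prod)) c.last.asIdeal c.last.isPrime
    have hge : (d : WithBot (WithTop ℕ))
        ≤ ringKrullDim ((T i).evSub ⧸ (T i).annEv (φ i ((List.ofFn y).prod))) := by
      rw [← hc]
      exact S.dim_q_ge (T i) (φ i) (hev i) (a i) (hu i) (hsurj_ev i) (hker i) _ c hi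
    have hle1 : ringKrullDim ((T i).evSub ⧸ (T i).annEv (φ i ((List.ofFn y).prod)))
        ≤ ringKrullDim (T i).evSub := ringKrullDim_quotient_le _
    have hledim : ringKrullDim (T i).evSub ≤ (d : WithBot (WithTop ℕ)) := by
      refine le_of_le_of_eq ?_ hd
      exact S.dim_ev_le (T i) (φ i) (hev i) (a i) (hu i) (hsurj_ev i) (hker i)
    have hdi : ringKrullDim (T i).evSub = (d : WithBot (WithTop ℕ)) :=
      le_antisymm hledim (le_trans hge hle1)
    have hqdi : ringKrullDim ((T i).evSub ⧸ (T i).annEv (φ i ((List.ofFn y).prod)))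
        = ringKrullDim (T i).evSub := le_antisymm hle1 (by rw [hdi]; exact hge)
    have hparams : (T i).IsOddParams (fun j => φ i (y j)) := by
      constructor
      · exact fun j => hod i _ (hy.1 j)
      · have hprodeq : (List.ofFn fun j => φ i (y j)).prod = φ i ((List.ofFn y).prod) := by
          rw [map_list_prod, List.map_ofFn]
          rfl
        rw [hprodeq]
        exact hqdi
    have ht1 : t ≤ (T i).ksdim1 := le_csSup ⟨m, hSIm i hdi⟩ ⟨_, hparams⟩
    exact le_trans ht1 (le_csSup hRsbdd ⟨i, hdi, rfl⟩)
  · apply csSup_le ⟨_, hRsne⟩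
    rintro r ⟨i, hdi, rfl⟩
    have hmem : (T i).ksdim1 ∈ {t : ℕ | ∃ z : Fin t → B i, (T i).IsOddParams z} :=
      Nat.sSup_mem ⟨0, hSI0 i⟩ ⟨m, hSIm i hdi⟩
    obtain ⟨z, hz⟩ := hmem
    choose x hx e he using fun j => hsurj_od i (z j) (hz.1 j)
    have haev : ∀ j, φ i ((a i : A) ^ (e j)) ∈ (T i).ev :=
      fun j => hev i _ (pow_mem (a i).2 (e j))
    have hcent : ∀ j, ∀ w, φ i ((a i : A) ^ (e j)) * w = w * φ i ((a i : A) ^ (e j)) :=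
      fun j w => (T i).even_comm (haev j) w
    have h2 : φ i ((List.ofFn x).prod)
        = (List.ofFn z).prod * (List.ofFn fun j => φ i ((a i : A) ^ (e j))).prod := by
      rw [map_list_prod, List.map_ofFn]
      rw [show ((φ i) ∘ x) = fun j => z j * φ i ((a i : A) ^ (e j)) from
        funext fun j => (he j).symm]
      exact prod_mul_central _ _ _ hcent
    have hUu : IsUnit ((List.ofFn fun j => φ i ((a i : A) ^ (e j))).prod) := by
      apply List.prod_isUnit
      intro w hw
      rw [List.mem_ofFn] at hw
      obtain ⟨j, rfl⟩ := hw
      show IsUnit (φ i ((a i : A) ^ e j))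
      rw [map_pow]
      exact (hu i).pow _
    have hann : (T i).annEv (φ i ((List.ofFn x).prod)) = (T i).annEv ((List.ofFn z).prod) := by
      ext cc
      rw [(T i).mem_annEv, (T i).mem_annEv, h2, ← mul_assoc]
      exact hUu.mul_left_eq_zero
    have hqTd : ringKrullDim ((T i).evSub ⧸ (T i).annEv (φ i ((List.ofFn x).prod)))
        = (d : WithBot (WithTop ℕ)) := by
      rw [hann, hz.2]
      exact hdi
    have hqle := S.dim_q_le (T i) (φ i) (hev i) (a i) (hu i) (hsurj_ev i) (hker i)
      ((List.ofFn x).prod)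
    have hge2 : (d : WithBot (WithTop ℕ))
        ≤ ringKrullDim (S.evSub ⧸ S.annEv (List.ofFn x).prod) := by
      rw [← hqTd]
      exact hqle
    have hle2 : ringKrullDim (S.evSub ⧸ S.annEv (List.ofFn x).prod)
        ≤ (d : WithBot (WithTop ℕ)) := by
      refine le_of_le_of_eq ?_ hd
      exact ringKrullDim_quotient_le _
    have hparams : S.IsOddParams x := ⟨hx, by rw [le_antisymm hle2 hge2, hd]; rfl⟩
    exact le_csSup hLbdd ⟨x, hparams⟩
end

section
/- Let k be a field of characteristic ≠ 2, let L be a field extension of k with |L| ≥ 2, and let V be a finite-dimensional L-vector space regarded as the odd part of the supercommutative superalgebra B̄ = L ⊕ V with V·V = 0. Then: (a) every L-subspace of V is a superideal of B̄; (b) for every L-subspace W' ⊆ V of codimension 1, the quotient R = L ⊕ V/W' is a superalgebra, and every L-linear map B̄ → R which is the identity on L and maps V into V/W' is a superalgebra homomorphism; (c) if W ⊊ V is a proper subspace, then there exist at least two distinct superalgebra homomorphisms B̄ → R (for suitable W' ⊇ W of codimension 1) that agree on the super-subalgebra L ⊕ W. -/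
open TrivSqZeroExt

/-- let `L` be a field extension of `k` (`char k ≠ 2`; `|L| ≥ 2` holds as
`L` is a field) and `V` a finite-dimensional `L`-vector space, and consider the
supercommutative superalgebra `B̄ = L ⊕ V` (with `V·V = 0`), i.e. `TrivSqZeroExt L V`.
Then
(a) every `L`-subspace `W ⊆ V` is a superideal of `B̄`;
(b) for every subspace `W' ⊆ V` of codimension `1`, `R = L ⊕ V/W'` is a superalgebra and
every `L`-linear map `B̄ → R` which is the identity on `L` and maps `V` to `V/W'` is a
superalgebra homomorphism;
(c) if `W ⊊ V` then there are at least two distinct superalgebra homomorphisms `B̄ → R`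
(for a suitable `W' ⊇ W` of codimension `1`) agreeing on the super-subalgebra `L ⊕ W`. -/
theorem trivSqZeroExt_superideals_and_homs
    (kk : Type) [Field kk] (hchar : (2 : kk) ≠ 0)
    (L : Type) [Field L] [Algebra kk L]
    (V : Type) [AddCommGroup V] [Module L V] [Module Lᵐᵒᵖ V] [IsCentralScalar L V]
    [FiniteDimensional L V] :
    -- (a)
    (∀ W : Submodule L V, ∃ I : Ideal (TrivSqZeroExt L V),
      ∀ x : TrivSqZeroExt L V, x ∈ I ↔ x.fst = 0 ∧ x.snd ∈ W) ∧
    -- (b)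
    (∀ W' : Submodule L V, Module.finrank L (V ⧸ W') = 1 →
      ∀ f : V →ₗ[L] V ⧸ W',
        ∃ g : TrivSqZeroExt L V →ₐ[L] TrivSqZeroExt L (V ⧸ W'),
          ∀ x : TrivSqZeroExt L V, g x = inl x.fst + inr (f x.snd)) ∧
    -- (c)
    (∀ W : Submodule L V, W ≠ ⊤ →
      ∃ W' : Submodule L V, W ≤ W' ∧ Module.finrank L (V ⧸ W') = 1 ∧
        ∃ g₁ g₂ : TrivSqZeroExt L V →ₐ[L] TrivSqZeroExt L (V ⧸ W'),
          g₁ ≠ g₂ ∧ ∀ x : TrivSqZeroExt L V, x.snd ∈ W → g₁ x = g₂ x) := by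
  refine ⟨?_, ?_, ?_⟩
  · -- (a)
    intro W
    refine ⟨{ carrier := {x : TrivSqZeroExt L V | x.fst = 0 ∧ x.snd ∈ W}
              add_mem' := ?_
              zero_mem' := ⟨rfl, W.zero_mem⟩
              smul_mem' := ?_ }, fun x => Iff.rfl⟩
    · rintro a b ⟨ha1, ha2⟩ ⟨hb1, hb2⟩
      exact ⟨by simp [ha1, hb1], W.add_mem ha2 hb2⟩
    · rintro c x ⟨hx1, hx2⟩
      refine ⟨by simp [smul_eq_mul, fst_mul, hx1], ?_⟩
      simp only [smul_eq_mul, snd_mul, hx1]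
      simpa using W.smul_mem c.fst hx2
  · -- (b)
    intro W' _ f
    refine ⟨map f, fun x => ?_⟩
    conv_lhs => rw [← inl_fst_add_inr_snd_eq x]
    rw [map_add, map_inl, map_inr]
  · -- (c)
    intro W hW
    obtain ⟨v, hv⟩ : ∃ v : V, v ∉ W := by
      by_contra h
      push_neg at h
      exact hW (Submodule.eq_top_iff'.2 h)
    have hv' : W.mkQ v ≠ 0 := by
      simpa [Submodule.Quotient.mk_eq_zero] using hv
    obtain ⟨φ, hφ⟩ : ∃ φ : Module.Dual L (V ⧸ W), φ (W.mkQ v) ≠ 0 := by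
      by_contra h
      push_neg at h
      exact hv' ((Module.forall_dual_apply_eq_zero_iff L _).1 h)
    set ψ : V →ₗ[L] L := φ ∘ₗ W.mkQ with hψ
    have hψv : ψ v ≠ 0 := hφ
    refine ⟨LinearMap.ker ψ, ?_, ?_, map (LinearMap.ker ψ).mkQ, map 0, ?_, ?_⟩
    · intro w hw
      simp [hψ, LinearMap.mem_ker, (Submodule.Quotient.mk_eq_zero W).2 hw]
    · -- finrank of quotient is 1
      have hsurj : Function.Surjective ψ := by
        intro c
        exact ⟨(c / ψ v) • v, by rw [map_smul, smul_eq_mul, div_mul_cancel₀ c hψv]⟩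
      have e := (LinearMap.quotKerEquivOfSurjective ψ hsurj).finrank_eq
      simpa using e
    · -- distinct
      intro h
      have hvker : v ∉ LinearMap.ker ψ := fun hc => hψv hc
      have : (LinearMap.ker ψ).mkQ v = 0 := by
        have := congrArg (fun g => snd (g (inr v : TrivSqZeroExt L V))) h
        simpa using this
      exact hvker ((Submodule.Quotient.mk_eq_zero _).1 this)
    · -- agree on W
      intro x hx
      have hx' : (LinearMap.ker ψ).mkQ x.snd = 0 := by
        refine (Submodule.Quotient.mk_eq_zero _).2 ?_
        simp [hψ, LinearMap.mem_ker, (Submodule.Quotient.mk_eq_zero W).2 hx]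
      ext
      · simp
      · simp [hx']
end

section
/- Let R and S be local supercommutative superalgebras over a field of characteristic ≠ 2, with S₁ a finitely generated S₀-module, and let ψ : R → S be a superalgebra homomorphism. Let J_R = R·R₁ and J_S = S·S₁ be the superideals generated by the odd parts. Assume: (1) the induced map R/J_R → S/J_S is surjective, and (2) S₁ = S₀·ψ(R₁). Then ψ is surjective. -/
variable {k A : Type} [Field k] [Ring A] [Algebra k A]

section Aux
variable {B : Type} [Ring B] [Algebra k B]

lemma aux_decomp (SS : SuperAlg k B) (b : B) :
    ∃ e ∈ SS.ev, ∃ o ∈ SS.od, b = e + o := by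
  have hb : b ∈ SS.ev ⊔ SS.od := by rw [SS.sup_eq_top]; trivial
  obtain ⟨e, he, o, ho, h⟩ := Submodule.mem_sup.mp hb
  exact ⟨e, he, o, ho, h.symm⟩

lemma aux_sq (hchar : (2 : k) ≠ 0) (SS : SuperAlg k B) {o : B} (ho : o ∈ SS.od) :
    o * o = 0 := by
  have h := SS.comm_oo o ho o ho
  have h2 : (2 : k) • (o * o) = 0 := by
    rw [two_smul]
    nth_rewrite 1 [h]
    exact neg_add_cancel _
  calc o * o = (2 : k)⁻¹ • ((2 : k) • (o * o)) := by
        rw [smul_smul, inv_mul_cancel₀ hchar, one_smul]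
    _ = 0 := by rw [h2, smul_zero]

lemma aux_evcomm (SS : SuperAlg k B) {c : B} (hc : c ∈ SS.ev) (b : B) :
    c * b = b * c := by
  obtain ⟨e, he, o, ho, rfl⟩ := aux_decomp SS b
  rw [mul_add, add_mul, SS.comm_ee c hc e he, SS.comm_eo c hc o ho]

lemma aux_prod_mem (hchar : (2 : k) ≠ 0) (SS : SuperAlg k B) {n : ℕ}
    (yg : Fin n → B) (hyg : ∀ i, yg i ∈ SS.od) {x : Fin n} :
    ∀ l : List (Fin n), x ∈ l → yg x * (l.map yg).prod = 0 := by
  intro l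
  induction l with
  | nil => intro h; exact absurd h List.not_mem_nil
  | cons a t ih =>
    intro h
    rw [List.map_cons, List.prod_cons, ← mul_assoc]
    rcases List.mem_cons.mp h with h | h
    · subst h
      rw [aux_sq hchar SS (hyg x), zero_mul]
    · rw [SS.comm_oo (yg x) (hyg x) (yg a) (hyg a), neg_mul, mul_assoc, ih h,
        mul_zero, neg_zero]

lemma aux_prod_dup (hchar : (2 : k) ≠ 0) (SS : SuperAlg k B) {n : ℕ}
    (yg : Fin n → B) (hyg : ∀ i, yg i ∈ SS.od) {x : Fin n} :
    ∀ l : List (Fin n), List.Sublist [x, x] l → (l.map yg).prod = 0 := by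
  intro l
  induction l with
  | nil => intro h; exact absurd (List.eq_nil_of_sublist_nil h) (by simp)
  | cons a t ih =>
    intro h
    rw [List.map_cons, List.prod_cons]
    cases h with
    | cons _ h' => rw [ih h', mul_zero]
    | cons_cons _ h' =>
      exact aux_prod_mem hchar SS yg hyg t (List.singleton_sublist.mp h')

lemma aux_prod_long (hchar : (2 : k) ≠ 0) (SS : SuperAlg k B) {n : ℕ}
    (yg : Fin n → B) (hyg : ∀ i, yg i ∈ SS.od) :
    ∀ l : List (Fin n), n + 1 ≤ l.length → (l.map yg).prod = 0 := by
  intro l hl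
  have hnd : ¬ l.Nodup := by
    intro hnod
    have := hnod.length_le_card
    simp [Fintype.card_fin] at this
    omega
  obtain ⟨x, hx⟩ := List.exists_duplicate_iff_not_nodup.mpr hnd
  exact aux_prod_dup hchar SS yg hyg l (List.duplicate_iff_sublist.mp hx)

end Aux

/-- let `ψ : R → S` be a homomorphism of local supercommutative
superalgebras with `S₁` finitely generated over `S₀`.  If the induced map
`R/J_R → S/J_S` is surjective (`J` denoting the superideal generated by the odd part)
and `S₁ = S₀·ψ(R₁)`, then `ψ` is surjective. -/
theorem surjective_of_mod_odd_surjective (hchar : (2 : k) ≠ 0)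
    {B : Type} [Ring B] [Algebra k B]
    (SR : SuperAlg k A) (SS : SuperAlg k B)
    -- both are local superalgebras:
    (hRloc : ∃! m : Ideal SR.evSub, m.IsMaximal)
    (hSloc : ∃! m : Ideal SS.evSub, m.IsMaximal)
    -- `S₁` is a finitely generated `S₀`-module:
    (n : ℕ) (yg : Fin n → B) (hyg : ∀ i, yg i ∈ SS.od)
    (hfg : ∀ b ∈ SS.od,
      b ∈ Submodule.span k {x : B | ∃ c ∈ SS.ev, ∃ i : Fin n, x = c * yg i})
    -- `ψ` is a superalgebra homomorphism:
    (ψ : A →ₐ[k] B)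
    (hev : ∀ x ∈ SR.ev, ψ x ∈ SS.ev) (hod : ∀ x ∈ SR.od, ψ x ∈ SS.od)
    -- (1) the induced map `R/J_R → S/J_S` is surjective:
    (h1 : ∀ s : B, ∃ r : A, s - ψ r ∈ Ideal.span (SS.od : Set B))
    -- (2) `S₁ = S₀·ψ(R₁)`:
    (h2 : (SS.od : Set B) ⊆
      ↑(Submodule.span k {x : B | ∃ c ∈ SS.ev, ∃ r ∈ SR.od, x = c * ψ r})) :
    Function.Surjective ψ := by
  set J : Ideal B := Ideal.span (SS.od : Set B) with hJdef
  set M : ℕ → Submodule k B := fun d => Submodule.span k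
    {x : B | ∃ c ∈ SS.ev, ∃ l : List (Fin n), d ≤ l.length ∧ x = c * (l.map yg).prod}
    with hMdef
  have hMgen : ∀ (d : ℕ) {c : B} (_ : c ∈ SS.ev) (l : List (Fin n)) (_ : d ≤ l.length),
      c * (l.map yg).prod ∈ M d := fun d c hc l hl =>
    Submodule.subset_span ⟨c, hc, l, hl, rfl⟩
  -- M d is closed under left multiplication by arbitrary elements of B
  have hMmul : ∀ (d : ℕ) (b x : B), x ∈ M d → b * x ∈ M d := by
    intro d b x hx
    induction hx using Submodule.span_induction with
    | mem x hx =>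
      obtain ⟨c, hc, l, hl, rfl⟩ := hx
      obtain ⟨e, he, o, ho, rfl⟩ := aux_decomp SS b
      rw [add_mul]
      refine (M d).add_mem ?_ ?_
      · rw [← mul_assoc]
        exact hMgen d (SS.mul_ee e he c hc) l hl
      · have ho' := hfg o ho
        clear ho
        induction ho' using Submodule.span_induction with
        | mem x hx =>
          obtain ⟨c', hc', i, rfl⟩ := hx
          have heq : c' * yg i * (c * (l.map yg).prod)
              = (c' * c) * ((i :: l).map yg).prod := by
            rw [List.map_cons, List.prod_cons]
            simp only [mul_assoc]
            rw [← mul_assoc (yg i) c, ← aux_evcomm SS hc (yg i), mul_assoc]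
          rw [heq]
          exact hMgen d (SS.mul_ee c' hc' c hc) (i :: l) (le_trans hl (by simp))
        | zero => rw [zero_mul]; exact (M d).zero_mem
        | add u v _ _ hu hv => rw [add_mul]; exact (M d).add_mem hu hv
        | smul a u _ hu => rw [smul_mul_assoc]; exact (M d).smul_mem a hu
    | zero => rw [mul_zero]; exact (M d).zero_mem
    | add u v _ _ hu hv => rw [mul_add]; exact (M d).add_mem hu hv
    | smul a u _ hu => rw [mul_smul_comm]; exact (M d).smul_mem a hu
  -- odd elements lie in M 1
  have hodM1 : ∀ o ∈ SS.od, o ∈ M 1 := by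
    intro o ho
    have ho' := hfg o ho
    clear ho
    induction ho' using Submodule.span_induction with
    | mem x hx =>
      obtain ⟨c, hc, i, rfl⟩ := hx
      have heq : c * yg i = c * (([i]).map yg).prod := by simp
      rw [heq]
      exact hMgen 1 hc [i] (by simp)
    | zero => exact (M 1).zero_mem
    | add u v _ _ hu hv => exact (M 1).add_mem hu hv
    | smul a u _ hu => exact (M 1).smul_mem a hu
  -- J ⊆ M 1
  have hJM1 : ∀ x ∈ J, x ∈ M 1 := by
    intro x hx
    induction hx using Submodule.span_induction with
    | mem x hx => exact hodM1 x hx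
    | zero => exact (M 1).zero_mem
    | add u v _ _ hu hv => exact (M 1).add_mem hu hv
    | smul b u _ hu => rw [smul_eq_mul]; exact hMmul 1 b u hu
  -- products
  have hMM : ∀ (d₁ d₂ : ℕ) (x y : B), x ∈ M d₁ → y ∈ M d₂ → x * y ∈ M (d₁ + d₂) := by
    intro d₁ d₂ x y hx hy
    induction hx using Submodule.span_induction with
    | mem x hx =>
      obtain ⟨c, hc, l, hl, rfl⟩ := hx
      induction hy using Submodule.span_induction with
      | mem y hy =>
        obtain ⟨c', hc', l', hl', rfl⟩ := hy
        have heq : (c * (l.map yg).prod) * (c' * (l'.map yg).prod)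
            = (c * c') * ((l ++ l').map yg).prod := by
          rw [List.map_append, List.prod_append]
          simp only [mul_assoc]
          rw [← mul_assoc ((l.map yg).prod) c', ← aux_evcomm SS hc' ((l.map yg).prod)]
          simp only [mul_assoc]
        rw [heq]
        exact hMgen _ (SS.mul_ee c hc c' hc') (l ++ l')
          (by rw [List.length_append]; omega)
      | zero => rw [mul_zero]; exact Submodule.zero_mem _
      | add u v _ _ hu hv => rw [mul_add]; exact Submodule.add_mem _ hu hv
      | smul a u _ hu => rw [mul_smul_comm]; exact Submodule.smul_mem _ a hu
    | zero => rw [zero_mul]; exact Submodule.zero_mem _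
    | add u v _ _ hu hv => rw [add_mul]; exact Submodule.add_mem _ hu hv
    | smul a u _ hu => rw [smul_mul_assoc]; exact Submodule.smul_mem _ a hu
  -- vanishing of M (n+1)
  have hMnil : ∀ x ∈ M (n + 1), x = 0 := by
    intro x hx
    induction hx using Submodule.span_induction with
    | mem x hx =>
      obtain ⟨c, hc, l, hl, rfl⟩ := hx
      rw [aux_prod_long hchar SS yg hyg l hl, mul_zero]
    | zero => rfl
    | add u v _ _ hu hv => rw [hu, hv, add_zero]
    | smul a u _ hu => rw [hu, smul_zero]
  -- J powers inside M
  have hJpowM : ∀ (d : ℕ) (x : B), x ∈ J ^ (d + 1) → x ∈ M (d + 1) := by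
    intro d
    induction d with
    | zero => intro x hx; rw [zero_add, Submodule.pow_one] at hx; exact hJM1 x hx
    | succ d ih =>
      intro x hx
      rw [Submodule.pow_succ] at hx
      refine Submodule.mul_induction_on hx ?_ ?_
      · intro a ha b hb
        exact hMM (d + 1) 1 a b (ih a ha) (hJM1 b hb)
      · intro u v hu hv
        exact Submodule.add_mem _ hu hv
  have hJnil : ∀ x ∈ J ^ (n + 1), x = 0 := fun x hx => hMnil x (hJpowM n x hx)
  -- odd images generate J-elements up to range and J²
  have hodJ : ∀ r ∈ SR.od, ψ r ∈ J := fun r hr => Ideal.subset_span (hod r hr)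
  have S1 : ∀ j ∈ J, ∃ t : B, (∃ r : A, ψ r = t) ∧ t ∈ J ∧ j - t ∈ J ^ 2 := by
    intro j hj
    induction hj using Submodule.span_induction with
    | mem o ho =>
      have ho' : o ∈ Submodule.span k {x : B | ∃ c ∈ SS.ev, ∃ r ∈ SR.od, x = c * ψ r} := h2 ho
      clear ho
      induction ho' using Submodule.span_induction with
      | mem x hx =>
        obtain ⟨c, hc, r, hr, rfl⟩ := hx
        obtain ⟨r'', hr''⟩ := h1 c
        refine ⟨ψ (r'' * r), ⟨r'' * r, rfl⟩, ?_, ?_⟩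
        · rw [map_mul]; exact Ideal.mul_mem_left J _ (hodJ r hr)
        · have heq : c * ψ r - ψ (r'' * r) = (c - ψ r'') * ψ r := by
            rw [map_mul, sub_mul]
          rw [heq]
          have h1' : c - ψ r'' ∈ J ^ 1 := by rw [Submodule.pow_one]; exact hr''
          exact Submodule.mul_mem_mul h1' (hodJ r hr)
      | zero =>
        exact ⟨0, ⟨0, map_zero ψ⟩, J.zero_mem, by rw [sub_zero]; exact Submodule.zero_mem _⟩
      | add u v _ _ hu hv =>
        obtain ⟨t₁, ⟨r₁, hr₁⟩, ht₁, hu'⟩ := hu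
        obtain ⟨t₂, ⟨r₂, hr₂⟩, ht₂, hv'⟩ := hv
        refine ⟨t₁ + t₂, ⟨r₁ + r₂, by rw [map_add, hr₁, hr₂]⟩, J.add_mem ht₁ ht₂, ?_⟩
        have : u + v - (t₁ + t₂) = (u - t₁) + (v - t₂) := by abel
        rw [this]; exact Submodule.add_mem _ hu' hv'
      | smul a u _ hu =>
        obtain ⟨t, ⟨r, hr⟩, ht, hu'⟩ := hu
        refine ⟨a • t, ⟨a • r, by rw [map_smul, hr]⟩, ?_, ?_⟩
        · rw [Algebra.smul_def]; exact Ideal.mul_mem_left J _ ht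
        · rw [← smul_sub, Algebra.smul_def]
          exact Ideal.mul_mem_left _ _ hu'
    | zero =>
      exact ⟨0, ⟨0, map_zero ψ⟩, J.zero_mem, by rw [sub_zero]; exact Submodule.zero_mem _⟩
    | add u v _ _ hu hv =>
      obtain ⟨t₁, ⟨r₁, hr₁⟩, ht₁, hu'⟩ := hu
      obtain ⟨t₂, ⟨r₂, hr₂⟩, ht₂, hv'⟩ := hv
      refine ⟨t₁ + t₂, ⟨r₁ + r₂, by rw [map_add, hr₁, hr₂]⟩, J.add_mem ht₁ ht₂, ?_⟩
      have : u + v - (t₁ + t₂) = (u - t₁) + (v - t₂) := by abel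
      rw [this]; exact Submodule.add_mem _ hu' hv'
    | smul b u hu' hu =>
      obtain ⟨t, ⟨r, hr⟩, ht, hut⟩ := hu
      obtain ⟨rb, hrb⟩ := h1 b
      refine ⟨ψ (rb * r), ⟨rb * r, rfl⟩, ?_, ?_⟩
      · rw [map_mul, hr]; exact Ideal.mul_mem_left J _ ht
      · have : b • u - ψ (rb * r) = (b - ψ rb) * t + b * (u - t) := by
          rw [map_mul, hr, smul_eq_mul]; noncomm_ring
        rw [this]
        have hA : (b - ψ rb) * t ∈ J ^ 2 := by
          have h1' : b - ψ rb ∈ J ^ 1 := by rw [Submodule.pow_one]; exact hrb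
          exact Submodule.mul_mem_mul h1' ht
        have hB : b * (u - t) ∈ J ^ 2 := Ideal.mul_mem_left _ _ hut
        exact Submodule.add_mem _ hA hB
  -- iterate: approximate J^(m+1)-elements by images up to J^(m+2)
  have S2 : ∀ m : ℕ, ∀ x ∈ J ^ (m + 1),
      ∃ t : B, (∃ r : A, ψ r = t) ∧ t ∈ J ^ (m + 1) ∧ x - t ∈ J ^ (m + 2) := by
    intro m
    induction m with
    | zero =>
      intro x hx
      rw [zero_add, Submodule.pow_one] at hx
      obtain ⟨t, hr, ht, hxt⟩ := S1 x hx
      exact ⟨t, hr, by rw [zero_add, Submodule.pow_one]; exact ht, hxt⟩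
    | succ m ih =>
      intro x hx
      rw [Submodule.pow_succ] at hx
      refine Submodule.mul_induction_on hx ?_ ?_
      · intro a ha b hb
        obtain ⟨ta, ⟨ra, hra⟩, hta, hat⟩ := ih a ha
        obtain ⟨tb, ⟨rb, hrb⟩, htb, hbt⟩ := S1 b hb
        refine ⟨ta * tb, ⟨ra * rb, by rw [map_mul, hra, hrb]⟩, ?_, ?_⟩
        · rw [Submodule.pow_succ]; exact Submodule.mul_mem_mul hta htb
        · have key : a * b - ta * tb = ta * (b - tb) + (a - ta) * b := by noncomm_ring
          rw [key]
          have hJJ : (J : Ideal B) ^ 2 = J * J := by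
            rw [Submodule.pow_succ, Submodule.pow_one]
          have hgen : ∀ u : B, u ∈ J * J → ta * u ∈ J ^ (m + 3) := by
            intro u hu
            refine Submodule.mul_induction_on hu ?_ ?_
            · intro j hj j' hj'
              have hassoc : ta * (j * j') = (ta * j) * j' := by rw [mul_assoc]
              rw [hassoc]
              have hstep : ta * j ∈ J ^ (m + 2) := by
                rw [Submodule.pow_succ]; exact Submodule.mul_mem_mul hta hj
              rw [show (m + 3) = (m + 2) + 1 by omega, Submodule.pow_succ]
              exact Submodule.mul_mem_mul hstep hj'
            · intro u v hu hv
              rw [mul_add]; exact Submodule.add_mem _ hu hv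
          have hA : ta * (b - tb) ∈ J ^ (m + 3) := by
            rw [hJJ] at hbt
            exact hgen _ hbt
          have hB : (a - ta) * b ∈ J ^ (m + 3) := by
            rw [show (m + 3) = (m + 2) + 1 by omega, Submodule.pow_succ]
            exact Submodule.mul_mem_mul hat hb
          exact Submodule.add_mem _ hA hB
      · intro u v hu hv
        obtain ⟨t₁, ⟨r₁, hr₁⟩, ht₁, hu'⟩ := hu
        obtain ⟨t₂, ⟨r₂, hr₂⟩, ht₂, hv'⟩ := hv
        refine ⟨t₁ + t₂, ⟨r₁ + r₂, by rw [map_add, hr₁, hr₂]⟩,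
          Submodule.add_mem _ ht₁ ht₂, ?_⟩
        have : u + v - (t₁ + t₂) = (u - t₁) + (v - t₂) := by abel
        rw [this]; exact Submodule.add_mem _ hu' hv'
  have S3 : ∀ m : ℕ, ∀ j ∈ J, ∃ t : B, (∃ r : A, ψ r = t) ∧ j - t ∈ J ^ (m + 1) := by
    intro m
    induction m with
    | zero =>
      intro j hj
      exact ⟨0, ⟨0, map_zero ψ⟩, by rw [sub_zero, zero_add, Submodule.pow_one]; exact hj⟩
    | succ m ih =>
      intro j hj
      obtain ⟨t, ⟨r, hr⟩, hjt⟩ := ih j hj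
      obtain ⟨t', ⟨r', hr'⟩, _, hjt'⟩ := S2 m (j - t) hjt
      refine ⟨t + t', ⟨r + r', by rw [map_add, hr, hr']⟩, ?_⟩
      rwa [← sub_sub]
  -- conclusion
  intro s
  obtain ⟨r, hr⟩ := h1 s
  obtain ⟨t, ⟨r', hr'⟩, hmem⟩ := S3 n (s - ψ r) hr
  have h0 : s - ψ r - t = 0 := hJnil _ hmem
  refine ⟨r + r', ?_⟩
  rw [map_add, hr']
  have hs : s = ψ r + t := by
    rw [sub_sub, sub_eq_zero] at h0
    exact h0
  exact hs.symm
end
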